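/- Let u ≥ 1 and m ≥ 2, and let a_0, a_1, …, a_m be natural numbers with a_i < 2^u for every i and a_{i−1} ≠ a_i for every i ∈ [1..m]. Define b_i = vbit(a_{i−1}, a_i) for i ∈ [1..m] (so b_{i−1} ≠ b_i for i ∈ [2..m]), and define c_i = vbit(b_{i−1}, b_i) for i ∈ [2..m]. Then c_{i−1} ≠ c_i for every i ∈ [3..m], and c_i < 2·size(2u) for every i ∈ [2..m], where size(x) denotes the number of binary digits of a positive natural number x (i.e., size(x) = ⌊log₂ x⌋ + 1). -/

import Mathlib

open scoped Classical

/-- `lbit x y` is the least index `i` such that the `i`-th binary digits of `x` and `y`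
differ (defined as `0` if `x = y`). -/
noncomputable def lbit (x y : ℕ) : ℕ :=
  if h : ∃ i, x.testBit i ≠ y.testBit i then Nat.find h else 0

/-- `vbit x y = 2 * lbit x y + a`, where `a` is the bit of `x` at position `lbit x y`. -/
noncomputable def vbit (x y : ℕ) : ℕ :=
  2 * lbit x y + (if Nat.testBit x (lbit x y) then 1 else 0)

/-! Deterministic coin tossing: `vbit x y` encodes both the position `i` of the lowest bit where
`x` and `y` differ and the bit of `x` there. If `vbit x y = vbit y z`, both positions are `i` and
`x`, `y` carry the same bit at `i`, contradicting the choice of `i`; so a proper colouring of a path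
stays proper, while colours below `2 ^ u` shrink to colours below `2 * u`. In the second round the
colours are below `2 * u < 2 ^ size (2 * u)`. -/

theorem testBit_lbit_ne {x y : ℕ} (h : x ≠ y) :
    x.testBit (lbit x y) ≠ y.testBit (lbit x y) := by
  have he := Nat.exists_testBit_ne_of_ne h
  rw [lbit, dif_pos he]
  exact Nat.find_spec he

theorem lbit_lt {u x y : ℕ} (h : x ≠ y) (hx : x < 2 ^ u) (hy : y < 2 ^ u) :
    lbit x y < u := by
  by_contra! hle
  have hpow : 2 ^ u ≤ 2 ^ lbit x y := Nat.pow_le_pow_right two_pos hle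
  apply testBit_lbit_ne h
  rw [Nat.testBit_lt_two_pow (hx.trans_le hpow), Nat.testBit_lt_two_pow (hy.trans_le hpow)]

theorem vbit_lt {u x y : ℕ} (h : x ≠ y) (hx : x < 2 ^ u) (hy : y < 2 ^ u) :
    vbit x y < 2 * u := by
  have := lbit_lt h hx hy
  unfold vbit
  split <;> omega

theorem vbit_ne_vbit {x y z : ℕ} (hxy : x ≠ y) : vbit x y ≠ vbit y z := by
  intro h
  unfold vbit at h
  have hlbit : lbit x y = lbit y z := by split at h <;> split at h <;> omega
  rw [← hlbit] at h
  have hbit : x.testBit (lbit x y) = y.testBit (lbit x y) := by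
    cases hx : x.testBit (lbit x y) <;> cases hy : y.testBit (lbit x y) <;> simp_all
  exact testBit_lbit_ne hxy hbit

theorem vbit_round {u k m : ℕ} {s t : ℕ → ℕ} (hs : ∀ i, k ≤ i → i ≤ m → s i < 2 ^ u)
    (hne : ∀ i, k + 1 ≤ i → i ≤ m → s (i - 1) ≠ s i)
    (ht : ∀ i, k + 1 ≤ i → i ≤ m → t i = vbit (s (i - 1)) (s i)) :
    (∀ i, k + 2 ≤ i → i ≤ m → t (i - 1) ≠ t i) ∧
    (∀ i, k + 1 ≤ i → i ≤ m → t i < 2 * u) := by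
  constructor
  · intro i hki him
    rw [ht (i - 1) (by omega) (by omega), ht i (by omega) him, show i - 1 - 1 = i - 2 by omega]
    exact vbit_ne_vbit (hne (i - 1) (by omega) (by omega))
  · intro i hki him
    rw [ht i hki him]
    exact vbit_lt (hne i hki him) (hs (i - 1) (by omega) (by omega)) (hs i (by omega) him)

theorem stmt3_general (u m : ℕ) (a b c : ℕ → ℕ)
    (ha : ∀ i ≤ m, a i < 2 ^ u)
    (hne : ∀ i, 1 ≤ i → i ≤ m → a (i - 1) ≠ a i)
    (hb : ∀ i, 1 ≤ i → i ≤ m → b i = vbit (a (i - 1)) (a i))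
    (hc : ∀ i, 2 ≤ i → i ≤ m → c i = vbit (b (i - 1)) (b i)) :
    (∀ i, 3 ≤ i → i ≤ m → c (i - 1) ≠ c i) ∧
    (∀ i, 2 ≤ i → i ≤ m → c i < 2 * Nat.size (2 * u)) := by
  obtain ⟨hbne, hblt⟩ := vbit_round (k := 0) (fun i _ hi => ha i hi) hne hb
  have hb_lt_pow : ∀ i, 1 ≤ i → i ≤ m → b i < 2 ^ Nat.size (2 * u) :=
    fun i h1 him => (hblt i h1 him).trans (Nat.lt_size_self _)
  exact vbit_round (k := 1) hb_lt_pow hbne hc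

/-- Two iterations of the deterministic coin tossing step: starting from a sequence
`a_0, …, a_m` of naturals below `2^u` with adjacent elements distinct, set
`b_i = vbit (a_{i-1}) (a_i)` for `i ∈ [1..m]` and `c_i = vbit (b_{i-1}) (b_i)` for
`i ∈ [2..m]`. Then adjacent elements of `c` are distinct and `c_i < 2 * size (2u)`,
where `size` (`Nat.size`) is the number of binary digits. -/
theorem stmt3 (u m : ℕ) (hu : 1 ≤ u) (hm : 2 ≤ m) (a b c : ℕ → ℕ)
    (ha : ∀ i ≤ m, a i < 2 ^ u)
    (hne : ∀ i, 1 ≤ i → i ≤ m → a (i - 1) ≠ a i)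
    (hb : ∀ i, 1 ≤ i → i ≤ m → b i = vbit (a (i - 1)) (a i))
    (hc : ∀ i, 2 ≤ i → i ≤ m → c i = vbit (b (i - 1)) (b i)) :
    (∀ i, 3 ≤ i → i ≤ m → c (i - 1) ≠ c i) ∧
    (∀ i, 2 ≤ i → i ≤ m → c i < 2 * Nat.size (2 * u)) :=
  stmt3_general u m a b c ha hne hb hc
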